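/- arXiv:1510.04702 — 2 statements merged into one kernel-verified Lean document; each statement's English description precedes it below -/
import Mathlib

section
/- Let N ≥ 1, let M be a real N × N matrix such that |uᵀ M ρ| ≤ 1/3 for all vectors u, ρ ∈ ℝ^N with ‖u‖ ≤ 1 and ‖ρ‖ ≤ 1 (Euclidean norm), and let d ≥ 1 be a natural number with 2N ≤ 4^d. Then Tr((MᵀM)^d) ≤ (1/2) · (2/3)^(2d). -/
/-!
The bilinear-form bound says that the ℓ² operator norm of `M` is at most `1/3`, so the C⋆-identity
gives `‖Mᵀ M‖ = ‖M‖² ≤ 1/9` and submultiplicativity `‖(Mᵀ M)^d‖ ≤ 9⁻ᵈ`. Every diagonal entry of a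
matrix is bounded by its operator norm, hence `Tr((Mᵀ M)^d) ≤ N 9⁻ᵈ ≤ 4ᵈ / (2 · 9ᵈ)`.
-/

open scoped Matrix.Norms.L2Operator RealInnerProductSpace

namespace Matrix

theorem sum_sum_mul_mul_eq_dotProduct_mulVec {m n : Type*} [Fintype m] [Fintype n]
    (A : Matrix m n ℝ) (u : EuclideanSpace ℝ m) (v : EuclideanSpace ℝ n) :
    ∑ i, ∑ j, u i * A i j * v j = u.ofLp ⬝ᵥ A *ᵥ v.ofLp := by
  simp [dotProduct, mulVec, Finset.mul_sum, mul_assoc]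

variable {n : Type*} [Fintype n] [DecidableEq n]

theorem l2_opNorm_le_of_dotProduct_mulVec_le {A : Matrix n n ℝ} {C : ℝ} (hC : 0 ≤ C)
    (h : ∀ u v : EuclideanSpace ℝ n, ‖u‖ = 1 → ‖v‖ = 1 → u.ofLp ⬝ᵥ A *ᵥ v.ofLp ≤ C) :
    ‖A‖ ≤ C := by
  rw [cstar_norm_def]
  refine ContinuousLinearMap.opNorm_le_of_re_inner_le hC fun v u hv hu => ?_
  simpa [real_inner_comm, inner_toEuclideanCLM] using h u v hu hv

theorem diag_le_l2_opNorm (A : Matrix n n ℝ) (i : n) : A i i ≤ ‖A‖ := by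
  set e : EuclideanSpace ℝ n := EuclideanSpace.single i 1
  have he : ‖e‖ = 1 := by simp [e]
  calc A i i = ⟪e, toEuclideanCLM (𝕜 := ℝ) A e⟫ := by simp [e, inner_toEuclideanCLM]
    _ ≤ ‖e‖ * ‖toEuclideanCLM (𝕜 := ℝ) A e‖ := real_inner_le_norm _ _
    _ ≤ ‖A‖ := by simpa [he, cstar_norm_def] using (toEuclideanCLM (𝕜 := ℝ) A).le_opNorm e

theorem trace_le_card_mul_l2_opNorm (A : Matrix n n ℝ) :
    A.trace ≤ Fintype.card n * ‖A‖ := by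
  simpa [trace] using Finset.sum_le_sum fun i (_ : i ∈ Finset.univ) => diag_le_l2_opNorm A i

end Matrix

theorem cast_mul_ninth_pow_le (N d : ℕ) (hNd : 2 * N ≤ 4 ^ d) :
    (N : ℝ) * (1 / 9) ^ d ≤ 1 / 2 * (2 / 3) ^ (2 * d) := by
  have hNd' : (2 * N : ℝ) ≤ 4 ^ d := by exact_mod_cast hNd
  calc (N : ℝ) * (1 / 9) ^ d = N / 9 ^ d := by rw [one_div_pow, mul_one_div]
    _ ≤ 4 ^ d / 2 / 9 ^ d := by gcongr; linarith
    _ = 1 / 2 * (2 / 3) ^ (2 * d) := by rw [pow_mul, div_pow, div_pow]; norm_num; ring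

open Matrix in
theorem soundness_trace_upper_bound_general
    (N : ℕ) (M : Matrix (Fin N) (Fin N) ℝ)
    (h : ∀ u ρ : EuclideanSpace ℝ (Fin N), ‖u‖ ≤ 1 → ‖ρ‖ ≤ 1 →
      |∑ i, ∑ j, u i * M i j * ρ j| ≤ 1 / 3)
    (d : ℕ) (hd : 1 ≤ d) (hNd : 2 * N ≤ 4 ^ d) :
    ((Mᵀ * M) ^ d).trace ≤ (1 / 2) * ((2 : ℝ) / 3) ^ (2 * d) := by
  have hM : ‖M‖ ≤ 1 / 3 := l2_opNorm_le_of_dotProduct_mulVec_le (by norm_num) fun u ρ hu hρ => by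
    simpa [sum_sum_mul_mul_eq_dotProduct_mulVec] using (le_abs_self _).trans (h u ρ hu.le hρ.le)
  have hMM : ‖Mᵀ * M‖ ≤ 1 / 9 := by
    rw [← conjTranspose_eq_transpose_of_trivial, l2_opNorm_conjTranspose_mul_self]
    nlinarith [norm_nonneg M]
  calc ((Mᵀ * M) ^ d).trace ≤ N * ‖(Mᵀ * M) ^ d‖ := by
        simpa using trace_le_card_mul_l2_opNorm ((Mᵀ * M) ^ d)
    _ ≤ N * (1 / 9) ^ d := by
        gcongr
        exact (norm_pow_le' _ hd).trans (pow_le_pow_left₀ (norm_nonneg _) hMM d)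
    _ ≤ 1 / 2 * (2 / 3) ^ (2 * d) := cast_mul_ninth_pow_le N d hNd

open Matrix in
theorem soundness_trace_upper_bound
    (N : ℕ) (hN : 1 ≤ N) (M : Matrix (Fin N) (Fin N) ℝ)
    (h : ∀ u ρ : EuclideanSpace ℝ (Fin N), ‖u‖ ≤ 1 → ‖ρ‖ ≤ 1 →
      |∑ i, ∑ j, u i * M i j * ρ j| ≤ 1 / 3)
    (d : ℕ) (hd : 1 ≤ d) (hNd : 2 * N ≤ 4 ^ d) :
    ((Mᵀ * M) ^ d).trace ≤ (1 / 2) * ((2 : ℝ) / 3) ^ (2 * d) :=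
  soundness_trace_upper_bound_general N M h d hd hNd
end

section
/- Let n ≥ 1 and let f : (Fin n → Bool) → Bool be any Boolean function. Then there exists P : (Fin n → Bool) → (Fin n → Bool) → ℝ such that: (i) P x a ≥ 0 for all x, a; (ii) for every x, the sum of P x a over all a equals 1; (iii) for every strict subset S of Fin n, every partial assignment g : Fin n → Bool, and every pair of inputs x, x' agreeing on S, the sum of P x a over all a agreeing with g on S equals the corresponding sum for x' (no-signalling); and (iv) whenever P x a > 0, the XOR ⊕_{j} a_j of the outcome bits equals f(x). -/
/-- The XOR (parity) of the bits `a 1, …, a n`. -/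
def xorParity {n : ℕ} (a : Fin n → Bool) : Bool :=
  (List.ofFn a).foldr xor false

lemma foldr_xor_eq_sum (l : List Bool) : l.foldr xor false = l.sum := by
  induction l with
  | nil => rfl
  | cons x t ih =>
    rw [List.foldr_cons, ih, List.sum_cons]
    cases x <;> cases t.sum <;> rfl

lemma xorParity_eq_sum {n : ℕ} (a : Fin n → Bool) : xorParity a = ∑ i, a i := by
  rw [xorParity, foldr_xor_eq_sum, List.sum_ofFn]

lemma xorParity_update {n : ℕ} (a : Fin n → Bool) (j : Fin n) :
    xorParity (Function.update a j (!a j)) = !(xorParity a) := by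
  simp only [xorParity_eq_sum]
  rw [Finset.sum_update_of_mem (Finset.mem_univ j),
    ← Finset.add_sum_erase _ a (Finset.mem_univ j), Finset.erase_eq]
  generalize (∑ i ∈ Finset.univ \ {j}, a i) = s
  cases a j <;> cases s <;> rfl

lemma card_filter_flip {n : ℕ} (j : Fin n) (p : (Fin n → Bool) → Prop) [DecidablePred p]
    (hp : ∀ a, p a → p (Function.update a j (!a j))) (b : Bool) :
    (Finset.univ.filter fun a => p a ∧ xorParity a = b).card
      = (Finset.univ.filter fun a => p a ∧ xorParity a = !b).card := by
  have hinv : ∀ a : Fin n → Bool,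
      Function.update (Function.update a j (!a j)) j (!(Function.update a j (!a j)) j) = a := by
    intro a
    simp [Function.update_self, Function.update_idem]
  apply Finset.card_bij' (fun a _ => Function.update a j (!a j))
    (fun a _ => Function.update a j (!a j))
  · intro a _; exact hinv a
  · intro a _; exact hinv a
  · intro a ha
    simp only [Finset.mem_filter, Finset.mem_univ, true_and] at ha ⊢
    exact ⟨hp a ha.1, by rw [xorParity_update, ha.2]⟩
  · intro a ha
    simp only [Finset.mem_filter, Finset.mem_univ, true_and] at ha ⊢
    exact ⟨hp a ha.1, by rw [xorParity_update, ha.2, Bool.not_not]⟩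

lemma card_parity {n : ℕ} (hn : 1 ≤ n) (b : Bool) :
    (Finset.univ.filter fun a : Fin n → Bool => xorParity a = b).card = 2 ^ (n - 1) := by
  have j : Fin n := ⟨0, hn⟩
  have key : ∀ b : Bool, (Finset.univ.filter fun a : Fin n → Bool => xorParity a = b).card
      = (Finset.univ.filter fun a : Fin n → Bool => xorParity a = !b).card := by
    intro b
    have := card_filter_flip j (fun _ : Fin n → Bool => True) (fun _ _ => trivial) b
    simpa using this
  have hsplit : (Finset.univ.filter fun a : Fin n → Bool => xorParity a = b).card
      + (Finset.univ.filter fun a : Fin n → Bool => ¬ (xorParity a = b)).card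
      = 2 ^ n := by
    rw [Finset.card_filter_add_card_filter_not]
    simp [Fintype.card_fun]
  have hneg : (Finset.univ.filter fun a : Fin n → Bool => ¬ (xorParity a = b)).card
      = (Finset.univ.filter fun a : Fin n → Bool => xorParity a = !b).card := by
    congr 1
    apply Finset.filter_congr
    intro a _
    cases xorParity a <;> cases b <;> simp
  rw [hneg, ← key b] at hsplit
  have h2 : 2 ^ n = 2 * 2 ^ (n - 1) := by
    rw [← pow_succ']
    congr 1
    omega
  omega

theorem exists_no_signalling_box_computing_parity
    (n : ℕ) (hn : 1 ≤ n) (f : (Fin n → Bool) → Bool) :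
    ∃ P : (Fin n → Bool) → (Fin n → Bool) → ℝ,
      (∀ x a, 0 ≤ P x a) ∧
      (∀ x, ∑ a : Fin n → Bool, P x a = 1) ∧
      (∀ S : Finset (Fin n), S ≠ Finset.univ →
        ∀ g x x' : Fin n → Bool, (∀ i ∈ S, x i = x' i) →
          ∑ a ∈ Finset.univ.filter (fun a : Fin n → Bool => ∀ i ∈ S, a i = g i), P x a =
          ∑ a ∈ Finset.univ.filter (fun a : Fin n → Bool => ∀ i ∈ S, a i = g i), P x' a) ∧
      (∀ x a, 0 < P x a → xorParity a = f x) := by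
  set c : ℝ := ((2 : ℝ) ^ (n - 1))⁻¹ with hc
  have hcpos : 0 < c := by positivity
  refine ⟨fun x a => if xorParity a = f x then c else 0, ?_, ?_, ?_, ?_⟩
  · intro x a
    dsimp only
    split <;> [exact hcpos.le; rfl]
  · intro x
    rw [Finset.sum_ite, Finset.sum_const, Finset.sum_const_zero, add_zero, nsmul_eq_mul,
      card_parity hn, hc]
    rw [Nat.cast_pow, Nat.cast_ofNat]
    field_simp
  · intro S hS g x x' _
    obtain ⟨j, hj⟩ : ∃ j, j ∉ S := by
      by_contra h
      push_neg at h
      exact hS (Finset.eq_univ_iff_forall.mpr h)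
    have hrw : ∀ b : Bool,
        ∑ a ∈ Finset.univ.filter (fun a : Fin n → Bool => ∀ i ∈ S, a i = g i),
          (if xorParity a = b then c else 0)
        = ((Finset.univ.filter (fun a : Fin n → Bool =>
            (∀ i ∈ S, a i = g i) ∧ xorParity a = b)).card : ℝ) * c := by
      intro b
      rw [Finset.sum_ite, Finset.sum_const, Finset.sum_const_zero, add_zero, nsmul_eq_mul,
        Finset.filter_filter]
    rw [hrw (f x), hrw (f x')]
    have hp : ∀ a : Fin n → Bool, (∀ i ∈ S, a i = g i) →
        (∀ i ∈ S, Function.update a j (!a j) i = g i) := by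
      intro a ha i hi
      rw [Function.update_of_ne (by rintro rfl; exact hj hi)]
      exact ha i hi
    rcases Bool.eq_or_eq_not (f x') (f x) with h | h
    · rw [h]
    · rw [h, card_filter_flip j _ hp (f x)]
  · intro x a h
    by_contra hne
    simp [hne] at h
end
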